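/- Let 𝔏 be a Lindblad generator in canonical form with nonnegative rates γ_n and orthonormal traceless jump operators L_n, and let {ψ_i} be any orthonormal basis of ℂ^d. Define W_{ij} = R_{ij} − δ_{ij} Σ_k R_{kj} with R_{ij} = Σ_n γ_n |⟨ψ_i, L_n ψ_j⟩|². Then the row-sum norm satisfies ‖W‖_∞ = max_i Σ_j |W_{ij}| ≤ Σ_n γ_n. -/

import Mathlib

open Matrix Finset

/-!
In the basis `ψ`, each jump operator becomes `M = U† L U`, where the unitary `U` has columns
`ψ j`, so the squared entries `|⟨ψ a, L ψ b⟩|²` of `M` sum to `Tr (L† L) = 1`. Since `R ≥ 0` and the columns of `W` sum to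
zero, row `i` of `|W|` sums to the off-diagonal mass of row `i` and column `i` of `R`; for each
`n` this cross of entries of `M` carries at most the total mass `1`, so weighting by `γ n ≥ 0`
gives the bound `∑ n, γ n`.
-/

section Orthonormal

variable {𝕜 ι : Type*} [RCLike 𝕜] [Fintype ι]

theorem Matrix.trace_conjTranspose_mul_self_eq_sum_norm_sq {m : Type*} [Fintype m]
    (M : Matrix m ι 𝕜) : (Mᴴ * M).trace = ((∑ i, ∑ j, ‖M i j‖ ^ 2 : ℝ) : 𝕜) := by
  simp only [trace, diag, mul_apply, conjTranspose_apply, RCLike.star_def, RCLike.conj_mul]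
  push_cast
  exact sum_comm

theorem Matrix.conjTranspose_mul_mul_apply_eq_dotProduct_mulVec (ψ : ι → ι → 𝕜)
    (A : Matrix ι ι 𝕜) (i j : ι) : ((of ψ)ᵀᴴ * A * (of ψ)ᵀ) i j = star (ψ i) ⬝ᵥ A *ᵥ ψ j := by
  rw [Matrix.mul_assoc, mul_apply]
  simp [mul_apply, dotProduct, mulVec]

variable [DecidableEq ι]

theorem Matrix.trace_conjTranspose_mul_self_unitary_conj {A U : Matrix ι ι 𝕜}
    (hU : U * Uᴴ = 1) : ((Uᴴ * A * U)ᴴ * (Uᴴ * A * U)).trace = (Aᴴ * A).trace := by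
  simp only [conjTranspose_mul, conjTranspose_conjTranspose, Matrix.mul_assoc]
  rw [← Matrix.mul_assoc U, hU, Matrix.one_mul, trace_mul_comm, Matrix.mul_assoc,
    Matrix.mul_assoc, hU, Matrix.mul_one]

theorem sum_norm_sq_dotProduct_mulVec_eq_trace {ψ : ι → ι → 𝕜}
    (hψ : ∀ i j, star (ψ i) ⬝ᵥ ψ j = if i = j then 1 else 0) (A : Matrix ι ι 𝕜) :
    ((∑ i, ∑ j, ‖star (ψ i) ⬝ᵥ A *ᵥ ψ j‖ ^ 2 : ℝ) : 𝕜) = (Aᴴ * A).trace := by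
  have hU : (of ψ)ᵀᴴ * (of ψ)ᵀ = 1 := by
    ext i j
    simpa [mul_apply, dotProduct, one_apply] using hψ i j
  simp only [← conjTranspose_mul_mul_apply_eq_dotProduct_mulVec,
    ← trace_conjTranspose_mul_self_eq_sum_norm_sq]
  exact trace_conjTranspose_mul_self_unitary_conj (mul_eq_one_comm.mp hU)

end Orthonormal

section RowSum

variable {ι : Type*} [Fintype ι] [DecidableEq ι]

theorem sum_abs_sub_colSum_diag {R W : Matrix ι ι ℝ} (hR : ∀ i j, 0 ≤ R i j)
    (hW : ∀ i j, W i j = R i j - (if i = j then ∑ k, R k j else 0)) (i : ι) :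
    ∑ j, |W i j| = ∑ j ∈ univ.erase i, R i j + ∑ k ∈ univ.erase i, R k i := by
  have hdiag : |W i i| = ∑ k ∈ univ.erase i, R k i := by
    rw [hW, if_pos rfl, ← add_sum_erase _ _ (mem_univ i), sub_add_cancel_left, abs_neg,
      abs_of_nonneg (sum_nonneg fun k _ => hR k i)]
  have hoff : ∀ j ∈ univ.erase i, |W i j| = R i j := fun j hj => by
    rw [hW, if_neg (ne_of_mem_erase hj).symm, sub_zero, abs_of_nonneg (hR i j)]
  rw [← add_sum_erase _ _ (mem_univ i), hdiag, sum_congr rfl hoff, add_comm]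

theorem sum_erase_row_add_sum_erase_col_le_sum {f : ι → ι → ℝ} (hf : ∀ i j, 0 ≤ f i j)
    (i : ι) : ∑ j ∈ univ.erase i, f i j + ∑ k ∈ univ.erase i, f k i ≤ ∑ a, ∑ b, f a b := by
  rw [← add_sum_erase _ _ (mem_univ i)]
  refine add_le_add ?_ (sum_le_sum fun k _ => ?_)
  · exact sum_le_sum_of_subset_of_nonneg (erase_subset _ _) fun j _ _ => hf i j
  · exact single_le_sum (fun j _ => hf k j) (mem_univ i)

end RowSum

theorem rate_matrix_row_sum_bound_general {d : ℕ}
    (γ : Fin (d ^ 2 - 1) → ℝ) (hγ : ∀ n, 0 ≤ γ n)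
    (L : Fin (d ^ 2 - 1) → Matrix (Fin d) (Fin d) ℂ)
    (horth : ∀ k l, ((L k)ᴴ * L l).trace = if k = l then 1 else 0)
    (ψ : Fin d → (Fin d → ℂ))
    (hψ : ∀ i j, star (ψ i) ⬝ᵥ ψ j = if i = j then 1 else 0)
    (R W : Matrix (Fin d) (Fin d) ℝ)
    (hR : ∀ i j, R i j = ∑ n, γ n * (‖star (ψ i) ⬝ᵥ (L n).mulVec (ψ j)‖) ^ 2)
    (hW : ∀ i j, W i j = R i j - (if i = j then ∑ k, R k j else 0)) :
    ∀ i, ∑ j, |W i j| ≤ ∑ n, γ n := by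
  intro i
  set f : Fin (d ^ 2 - 1) → Fin d → Fin d → ℝ := fun n a b => ‖star (ψ a) ⬝ᵥ L n *ᵥ ψ b‖ ^ 2
  have hf : ∀ n a b, 0 ≤ f n a b := fun n a b => sq_nonneg _
  have hmass : ∀ n, ∑ a, ∑ b, f n a b = 1 := fun n =>
    Complex.ofReal_injective <| by
      simpa [f] using (sum_norm_sq_dotProduct_mulVec_eq_trace hψ (L n)).trans (horth n n)
  have hR0 : ∀ a b, 0 ≤ R a b := fun a b =>
    hR a b ▸ sum_nonneg fun n _ => mul_nonneg (hγ n) (hf n a b)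
  calc ∑ j, |W i j| = ∑ j ∈ univ.erase i, R i j + ∑ k ∈ univ.erase i, R k i :=
        sum_abs_sub_colSum_diag hR0 hW i
    _ = ∑ n, γ n * (∑ j ∈ univ.erase i, f n i j + ∑ k ∈ univ.erase i, f n k i) := by
        simp only [hR, mul_add, mul_sum, sum_add_distrib]
        rw [sum_comm (s := univ.erase i), sum_comm (s := univ.erase i)]
    _ ≤ ∑ n, γ n * 1 := by
        gcongr with n
        · exact hγ n
        · exact hmass n ▸ sum_erase_row_add_sum_erase_col_le_sum (hf n) i
    _ = ∑ n, γ n := by simp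

/-- Row-sum norm bound for the Teich–Mahler rate matrix: with nonnegative
canonical rates `γ`, orthonormal traceless jump operators `L n`, any
orthonormal basis `ψ` of `ℂ^d`, `R i j = ∑ n γ n |⟨ψ i, L n (ψ j)⟩|²` and
`W i j = R i j - δ_{ij} ∑ k R k j`, one has
`‖W‖_∞ = max_i ∑ j |W i j| ≤ ∑ n γ n`. -/
theorem rate_matrix_row_sum_bound {d : ℕ}
    (γ : Fin (d ^ 2 - 1) → ℝ) (hγ : ∀ n, 0 ≤ γ n)
    (L : Fin (d ^ 2 - 1) → Matrix (Fin d) (Fin d) ℂ)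
    (horth : ∀ k l, ((L k)ᴴ * L l).trace = if k = l then 1 else 0)
    (htr : ∀ k, (L k).trace = 0)
    (ψ : Fin d → (Fin d → ℂ))
    (hψ : ∀ i j, star (ψ i) ⬝ᵥ ψ j = if i = j then 1 else 0)
    (R W : Matrix (Fin d) (Fin d) ℝ)
    (hR : ∀ i j, R i j = ∑ n, γ n * (‖star (ψ i) ⬝ᵥ (L n).mulVec (ψ j)‖) ^ 2)
    (hW : ∀ i j, W i j = R i j - (if i = j then ∑ k, R k j else 0)) :
    ∀ i, ∑ j, |W i j| ≤ ∑ n, γ n :=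
  rate_matrix_row_sum_bound_general γ hγ L horth ψ hψ R W hR hW
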